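/- arXiv:1501.07870 — 2 statements merged into one kernel-verified Lean document; each statement's English description precedes it below -/
import Mathlib

section
/- Consider a one-dimensional network: sources and destinations are points on the real line (given by injective position functions), and the bipartite topology graph satisfies source convexity: if source S is adjacent to destinations D and D', then S is adjacent to every destination whose position lies strictly between those of D and D'. Then the topology graph is chordal bipartite: it contains no chordless cycle of length at least 6. -/
section AuxChordal

open SimpleGraph Walk

variable {V : Type*} {G : SimpleGraph V}

lemma getVert_eq_support_getElem {u v : V} (p : G.Walk u v) {i : ℕ} (h : i ≤ p.length) :
    p.getVert i = p.support[i]'(by simp [Walk.length_support]; omega) := by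
  induction p generalizing i with
  | nil =>
    have : i = 0 := by simpa using h
    subst this; simp
  | cons hadj q ih =>
    cases i with
    | zero => simp
    | succ n =>
      simp only [Walk.getVert_cons_succ, Walk.support_cons]
      rw [ih (by simpa using h)]
      simp

lemma cycle_getVert_injOn {u : V} {c : G.Walk u u} (hc : c.IsCycle) {i j : ℕ}
    (hi : i < c.length) (hj : j < c.length) (h : c.getVert i = c.getVert j) : i = j := by
  have hnd : c.support.tail.Nodup := hc.support_nodup
  have hlen : c.support.tail.length = c.length := by
    simp [Walk.length_support]
  have htail : ∀ (k : ℕ) (hk1 : 1 ≤ k) (hk2 : k ≤ c.length),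
      c.getVert k = c.support.tail[k-1]'(by simp [List.length_tail, Walk.length_support]; omega) := by
    intro k hk1 hk2
    rw [_root_.getVert_eq_support_getElem c hk2]
    rw [List.getElem_tail]
    congr 1
    omega
  -- handle zero cases using getVert length = u
  rcases Nat.eq_zero_or_pos i with rfl | hi1
  · rcases Nat.eq_zero_or_pos j with rfl | hj1
    · rfl
    · exfalso
      have e1 := htail j hj1 hj.le
      have e2 := htail c.length (by omega) le_rfl
      have hu : c.getVert c.length = c.getVert 0 := by
        rw [Walk.getVert_length, Walk.getVert_zero]
      have key : c.support.tail[c.length-1]'(by simp [List.length_tail, Walk.length_support]; omega)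
          = c.support.tail[j-1]'(by simp [List.length_tail, Walk.length_support]; omega) := by
        rw [← e2, ← e1, hu, h]
      have := (hnd.getElem_inj_iff).mp key
      omega
  · rcases Nat.eq_zero_or_pos j with rfl | hj1
    · exfalso
      have e1 := htail i hi1 hi.le
      have e2 := htail c.length (by omega) le_rfl
      have hu : c.getVert c.length = c.getVert 0 := by
        rw [Walk.getVert_length, Walk.getVert_zero]
      have key : c.support.tail[c.length-1]'(by simp [List.length_tail, Walk.length_support]; omega)
          = c.support.tail[i-1]'(by simp [List.length_tail, Walk.length_support]; omega) := by
        rw [← e2, ← e1, hu, ← h]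
      have := (hnd.getElem_inj_iff).mp key
      omega
    · have e1 := htail i hi1 hi.le
      have e2 := htail j hj1 hj.le
      rw [e1, e2] at h
      have := (hnd.getElem_inj_iff).mp h
      omega

lemma cycle_neighbor {u : V} {c : G.Walk u u} (hc : c.IsCycle) {i : ℕ}
    (hi1 : 1 ≤ i) (hi : i < c.length) {y : V}
    (h : c.toSubgraph.Adj (c.getVert i) y) :
    y = c.getVert (i - 1) ∨ y = c.getVert (i + 1) := by
  obtain ⟨j, hj, hjl⟩ := (Walk.toSubgraph_adj_iff _).mp h
  rw [Sym2.eq_iff] at hj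
  rcases hj with ⟨h1, h2⟩ | ⟨h1, h2⟩
  · have : j = i := cycle_getVert_injOn hc hjl hi h1
    subst this
    exact Or.inr h2.symm
  · -- getVert j = y, getVert (j+1) = getVert i
    rcases Nat.lt_or_ge (j+1) c.length with hlt | hge
    · have : j + 1 = i := cycle_getVert_injOn hc hlt hi h2
      left; rw [← h1, ← this]; simp
    · have hj1 : j + 1 = c.length := by omega
      exfalso
      have : c.getVert (j+1) = c.getVert 0 := by
        rw [hj1, Walk.getVert_length, Walk.getVert_zero]
      rw [h2] at this
      have := cycle_getVert_injOn hc hi (by omega : 0 < c.length) this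
      omega

end AuxChordal


def biGraph {S D : Type*} (E : S → D → Prop) : SimpleGraph (S ⊕ D) where
  Adj u v := (∃ i j, u = Sum.inl i ∧ v = Sum.inr j ∧ E i j) ∨
    (∃ i j, u = Sum.inr j ∧ v = Sum.inl i ∧ E i j)
  symm := by
    constructor
    rintro u v (⟨i, j, rfl, rfl, h⟩ | ⟨i, j, rfl, rfl, h⟩)
    · exact Or.inr ⟨i, j, rfl, rfl, h⟩
    · exact Or.inl ⟨i, j, rfl, rfl, h⟩
  loopless := by
    constructor
    rintro u (⟨i, j, h1, h2, _⟩ | ⟨i, j, h1, h2, _⟩) <;> subst h1 <;> simp_all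

/-- A chord of a cycle `w`: an edge of `G` joining two vertices of the cycle that is
not itself an edge of the cycle. -/
def HasChord {V : Type*} {G : SimpleGraph V} {v : V} (w : G.Walk v v) : Prop :=
  ∃ a b, a ∈ w.support ∧ b ∈ w.support ∧ G.Adj a b ∧ s(a, b) ∉ w.edges

/-- A one-dimensional network satisfying source convexity is chordal bipartite: every
cycle of length at least 6 in its topology graph has a chord. -/
theorem stmt_8 {S D : Type*} (E : S → D → Prop) (posS : S → ℝ) (posD : D → ℝ)
    (hS : Function.Injective posS) (hD : Function.Injective posD)
    (hconv : ∀ s d1 d2 d3, posD d1 < posD d2 → posD d2 < posD d3 →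
      E s d1 → E s d3 → E s d2)
    (v : S ⊕ D) (w : (biGraph E).Walk v v) (hw : w.IsCycle) (hlen : 6 ≤ w.length) :
    HasChord w := by
  classical
  -- there is a destination on the cycle
  have hne : ∃ d : D, Sum.inr d ∈ w.support := by
    cases v with
    | inr d => exact ⟨d, w.start_mem_support⟩
    | inl s =>
      have hadj := w.adj_getVert_succ (by omega : 0 < w.length)
      rw [w.getVert_zero] at hadj
      rcases hadj with ⟨s', d', hx, hy, hE⟩ | ⟨s', d', hx, hy, hE⟩
      · refine ⟨d', ?_⟩
        rw [← hy]
        exact SimpleGraph.Walk.mem_support_iff_exists_getVert.mpr ⟨1, rfl, by omega⟩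
      · exact absurd hx (by simp)
  have hfin : {d : D | Sum.inr d ∈ w.support}.Finite := by
    have : {d : D | Sum.inr d ∈ w.support} = Sum.inr ⁻¹' {x | x ∈ w.support} := rfl
    rw [this]
    exact Set.Finite.preimage (Set.injOn_of_injective Sum.inr_injective)
      (w.support.finite_toSet)
  obtain ⟨dm, hdm, hmin⟩ := Set.exists_min_image _ posD hfin hne
  set c := w.rotate _ hdm with hc_def
  have hc : c.IsCycle := hw.rotate hdm
  have hsub : c.toSubgraph = w.toSubgraph := w.toSubgraph_rotate hdm
  have hlenc : c.length = w.length := by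
    have h1 := (SimpleGraph.Walk.rotate_edges w _ hdm).perm.length_eq
    rw [← SimpleGraph.Walk.length_edges, ← SimpleGraph.Walk.length_edges]; exact h1
  have hn6 : 6 ≤ c.length := by omega
  set n := c.length with hn
  have hmemw : ∀ x, x ∈ c.support → x ∈ w.support := fun x hx =>
    (w.mem_verts_toSubgraph).mp (hsub ▸ ((c.mem_verts_toSubgraph).mpr hx))
  have hedge : ∀ a b : S ⊕ D, s(a, b) ∈ w.edges → c.toSubgraph.Adj a b := by
    intro a b h
    rw [hsub]
    exact SimpleGraph.Subgraph.mem_edgeSet.mp ((w.mem_edges_toSubgraph).mpr h)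
  have hv0 : c.getVert 0 = Sum.inr dm := c.getVert_zero
  have hvn : c.getVert n = Sum.inr dm := c.getVert_length
  -- shape of getVert 1
  have a01 : (biGraph E).Adj (c.getVert 0) (c.getVert 1) := c.adj_getVert_succ (by omega)
  obtain ⟨s1, hs1, hEs1dm⟩ : ∃ s1, c.getVert 1 = Sum.inl s1 ∧ E s1 dm := by
    rcases (a01 : (∃ i j, _ = Sum.inl i ∧ _ = Sum.inr j ∧ E i j) ∨
        (∃ i j, _ = Sum.inr j ∧ _ = Sum.inl i ∧ E i j)) with
      ⟨s', d', hx, hy, hE⟩ | ⟨s', d', hx, hy, hE⟩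
    · rw [hv0] at hx; exact absurd hx (by simp)
    · rw [hv0] at hx
      obtain rfl : d' = dm := (Sum.inr_injective hx.symm)
      exact ⟨s', hy, hE⟩
  have a12 : (biGraph E).Adj (c.getVert 1) (c.getVert 2) := c.adj_getVert_succ (by omega)
  obtain ⟨a, ha, hEs1a⟩ : ∃ a, c.getVert 2 = Sum.inr a ∧ E s1 a := by
    rcases (a12 : (∃ i j, _ = Sum.inl i ∧ _ = Sum.inr j ∧ E i j) ∨
        (∃ i j, _ = Sum.inr j ∧ _ = Sum.inl i ∧ E i j)) with
      ⟨s', d', hx, hy, hE⟩ | ⟨s', d', hx, hy, hE⟩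
    · rw [hs1] at hx
      obtain rfl : s' = s1 := (Sum.inl_injective hx.symm)
      exact ⟨d', hy, hE⟩
    · rw [hs1] at hx; exact absurd hx (by simp)
  -- shape of getVert (n-1)
  have am : (biGraph E).Adj (c.getVert (n-1)) (c.getVert n) := by
    have h := c.adj_getVert_succ (show n - 1 < c.length by omega)
    have : n - 1 + 1 = n := by omega
    rwa [this] at h
  rw [hvn] at am
  obtain ⟨s2, hs2, hEs2dm⟩ : ∃ s2, c.getVert (n-1) = Sum.inl s2 ∧ E s2 dm := by
    rcases (am : (∃ i j, _ = Sum.inl i ∧ _ = Sum.inr j ∧ E i j) ∨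
        (∃ i j, _ = Sum.inr j ∧ _ = Sum.inl i ∧ E i j)) with
      ⟨s', d', hx, hy, hE⟩ | ⟨s', d', hx, hy, hE⟩
    · obtain rfl : d' = dm := Sum.inr_injective hy.symm
      exact ⟨s', hx, hE⟩
    · exact absurd hy (by simp)
  have am2 : (biGraph E).Adj (c.getVert (n-2)) (c.getVert (n-1)) := by
    have h := c.adj_getVert_succ (show n - 2 < c.length by omega)
    have : n - 2 + 1 = n - 1 := by omega
    rwa [this] at h
  obtain ⟨b, hb, hEs2b⟩ : ∃ b, c.getVert (n-2) = Sum.inr b ∧ E s2 b := by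
    rcases (am2 : (∃ i j, _ = Sum.inl i ∧ _ = Sum.inr j ∧ E i j) ∨
        (∃ i j, _ = Sum.inr j ∧ _ = Sum.inl i ∧ E i j)) with
      ⟨s', d', hx, hy, hE⟩ | ⟨s', d', hx, hy, hE⟩
    · rw [hs2] at hy; exact absurd hy (by simp)
    · rw [hs2] at hy
      obtain rfl : s' = s2 := Sum.inl_injective hy.symm
      exact ⟨d', hx, hE⟩
  -- distinctness
  have hdma : dm ≠ a := by
    intro h
    have : c.getVert 0 = c.getVert 2 := by rw [hv0, ha, h]
    have := cycle_getVert_injOn hc (by omega) (by omega) this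
    omega
  have hdmb : dm ≠ b := by
    intro h
    have : c.getVert 0 = c.getVert (n-2) := by rw [hv0, hb, h]
    have := cycle_getVert_injOn hc (by omega) (by omega) this
    omega
  have hab : a ≠ b := by
    intro h
    have : c.getVert 2 = c.getVert (n-2) := by rw [ha, hb, h]
    have := cycle_getVert_injOn hc (by omega) (by omega) this
    omega
  -- membership of a, b on the cycle
  have hmem2 : Sum.inr a ∈ w.support := by
    apply hmemw
    exact SimpleGraph.Walk.mem_support_iff_exists_getVert.mpr ⟨2, ha, by omega⟩
  have hmemn2 : Sum.inr b ∈ w.support := by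
    apply hmemw
    exact SimpleGraph.Walk.mem_support_iff_exists_getVert.mpr ⟨n-2, hb, by omega⟩
  have hmem1 : Sum.inl s1 ∈ w.support := by
    apply hmemw
    exact SimpleGraph.Walk.mem_support_iff_exists_getVert.mpr ⟨1, hs1, by omega⟩
  have hmemn1 : Sum.inl s2 ∈ w.support := by
    apply hmemw
    exact SimpleGraph.Walk.mem_support_iff_exists_getVert.mpr ⟨n-1, hs2, by omega⟩
  -- minimality gives strict inequalities
  have hlta : posD dm < posD a :=
    lt_of_le_of_ne (hmin a hmem2) (fun h => hdma (hD h))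
  have hltb : posD dm < posD b :=
    lt_of_le_of_ne (hmin b hmemn2) (fun h => hdmb (hD h))
  rcases lt_or_gt_of_ne (show posD a ≠ posD b from fun h => hab (hD h)) with hcase | hcase
  · -- posD a < posD b : chord from s2 to a
    have hEs2a : E s2 a := hconv s2 dm a b hlta hcase hEs2dm hEs2b
    refine ⟨Sum.inl s2, Sum.inr a, hmemn1, hmem2, Or.inl ⟨s2, a, rfl, rfl, hEs2a⟩, ?_⟩
    intro hmem
    have hadj := hedge _ _ hmem
    rw [← hs2] at hadj
    rcases cycle_neighbor hc (show 1 ≤ n - 1 by omega) (show n - 1 < c.length by omega) hadj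
      with h | h
    · rw [show n - 1 - 1 = n - 2 by omega, hb] at h
      exact hab (Sum.inr_injective h)
    · rw [show n - 1 + 1 = n by omega, hvn] at h
      exact hdma (Sum.inr_injective h).symm
  · -- posD b < posD a : chord from s1 to b
    have hEs1b : E s1 b := hconv s1 dm b a hltb hcase hEs1dm hEs1a
    refine ⟨Sum.inl s1, Sum.inr b, hmem1, hmemn2, Or.inl ⟨s1, b, rfl, rfl, hEs1b⟩, ?_⟩
    intro hmem
    have hadj := hedge _ _ hmem
    rw [← hs1] at hadj
    rcases cycle_neighbor hc (le_refl 1) (show 1 < c.length by omega) hadj with h | h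
    · rw [show (1:ℕ) - 1 = 0 from rfl, hv0] at h
      exact hdmb (Sum.inr_injective h).symm
    · rw [show (1:ℕ) + 1 = 2 from rfl, ha] at h
      exact hab (Sum.inr_injective h.symm)
end

section
/- Let G be a chordal bipartite graph (no chordless cycle of length >= 6). Then for every clique C in the conflict graph of the edges of G, the associated demand graph is acyclic. -/
/-- Two messages (edges of a bipartite graph, written as (source, destination) pairs)
conflict if they share a source, share a destination, or one source is connected to the
other destination. -/
def conflict {S D : Type*} (E : S → D → Prop) (e f : S × D) : Prop :=
  e.1 = f.1 ∨ e.2 = f.2 ∨ E e.1 f.2 ∨ E f.1 e.2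

/-- The demand graph of a set C of messages: arcs from each message to its destination,
and from a destination (of some message in C) to a message whose source is not connected
to that destination. -/
def demandRel {S D : Type*} (E : S → D → Prop) (C : Set (S × D)) :
    (S × D) ⊕ D → (S × D) ⊕ D → Prop
  | Sum.inl e, Sum.inr d => e ∈ C ∧ e.2 = d
  | Sum.inr d, Sum.inl e => e ∈ C ∧ (∃ f ∈ C, f.2 = d) ∧ ¬ E e.1 d
  | _, _ => False

section Aux

lemma zmod_cast_val {k : ℕ} [NeZero k] (i : ZMod k) : ((i.val : ℕ) : ZMod k) = i := by
  rw [ZMod.natCast_val, ZMod.cast_id]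

lemma zmod_add_one_val {k : ℕ} [NeZero k] (i : ZMod k) (h : i.val + 1 < k) :
    (i + 1).val = i.val + 1 := by
  conv_lhs => rw [← zmod_cast_val i]
  rw [show ((i.val : ℕ) : ZMod k) + 1 = ((i.val + 1 : ℕ) : ZMod k) by push_cast; ring,
    ZMod.val_natCast, Nat.mod_eq_of_lt h]

lemma zmod_add_one_eq_zero {k : ℕ} [NeZero k] (i : ZMod k) (h : i.val + 1 = k) :
    i + 1 = 0 := by
  conv_lhs => rw [← zmod_cast_val i]
  rw [show ((i.val : ℕ) : ZMod k) + 1 = ((i.val + 1 : ℕ) : ZMod k) by push_cast; ring,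
    h, ZMod.natCast_self]

lemma cycle_to_fun {α : Type*} {r : α → α → Prop} {e : α} (h : Relation.TransGen r e e) :
    ∃ (k : ℕ), 1 ≤ k ∧ ∃ f : ZMod k → α, ∀ i, r (f i) (f (i + 1)) := by
  obtain ⟨b, hb, hrt⟩ := Relation.TransGen.head'_iff.mp h
  obtain ⟨l, hchain, hlast⟩ := List.exists_isChain_cons_of_relationReflTransGen hrt
  set L : List α := e :: b :: l with hL
  have hch : List.Chain' r L := List.IsChain.cons_cons hb hchain
  set k := (b :: l).length with hk
  have hk1 : 1 ≤ k := by simp [hk]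
  haveI : NeZero k := ⟨by omega⟩
  have hLlen : L.length = k + 1 := by simp [hL, hk]
  have hstep : ∀ t : ℕ, t < k → r (L.getD t e) (L.getD (t + 1) e) := by
    intro t ht
    have h1 : t < L.length - 1 := by omega
    have := List.isChain_iff_getElem.mp hch t (by omega)
    rwa [← List.getD_eq_getElem L e,
      ← List.getD_eq_getElem L e] at this
  have hlastL : L.getD k e = e := by
    have h2 : (b :: l).getLast (List.cons_ne_nil b l) = e := hlast
    rw [List.getLast_eq_getElem] at h2
    show (e :: b :: l).getD (l.length + 1) e = e
    rw [List.getD_cons_succ, List.getD_eq_getElem (b :: l) e (by simp)]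
    simpa using h2
  refine ⟨k, hk1, fun i => L.getD i.val e, ?_⟩
  intro i
  show r (L.getD i.val e) (L.getD (i + 1).val e)
  have hiv : i.val < k := ZMod.val_lt i
  rcases lt_or_eq_of_le (Nat.succ_le_of_lt hiv) with hlt | heq
  · rw [zmod_add_one_val i hlt]
    exact hstep i.val hiv
  · rw [zmod_add_one_eq_zero i heq, ZMod.val_zero]
    have h3 := hstep i.val hiv
    have heq' : i.val + 1 = k := heq
    rw [heq', hlastL] at h3
    simpa [hL, List.getD_cons_zero] using h3

lemma demand_to_R {S D : Type*} (E : S → D → Prop) (C : Set (S × D)) {x : (S × D) ⊕ D}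
    (h : Relation.TransGen (demandRel E C) x x) :
    ∃ e, Relation.TransGen (fun e f : S × D => e ∈ C ∧ f ∈ C ∧ ¬ E f.1 e.2) e e := by
  set R := fun e f : S × D => e ∈ C ∧ f ∈ C ∧ ¬ E f.1 e.2 with hR
  have main : ∀ (e' : S × D) (x : (S × D) ⊕ D),
      Relation.TransGen (demandRel E C) x (Sum.inl e') →
      (∀ e, x = Sum.inl e → Relation.TransGen R e e') ∧
      (∀ d, x = Sum.inr d → ∀ g, g ∈ C → g.2 = d → Relation.TransGen R g e') := by
    intro e' x h
    induction h using Relation.TransGen.head_induction_on with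
    | single h =>
      rename_i a
      constructor
      · rintro e rfl
        exact h.elim
      · rintro d rfl g hg hgd
        exact Relation.TransGen.single ⟨hg, h.1, by rw [hgd]; exact h.2.2⟩
    | head h' htr ih =>
      rename_i a c
      constructor
      · rintro e rfl
        rcases c with e2 | d
        · exact h'.elim
        · exact ih.2 d rfl e h'.1 h'.2
      · rintro d rfl g hg hgd
        rcases c with e2 | d2
        · exact Relation.TransGen.head ⟨hg, h'.1, by rw [hgd]; exact h'.2.2⟩ (ih.1 e2 rfl)
        · exact h'.elim
  rcases x with e | d
  · exact ⟨e, (main e _ h).1 e rfl⟩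
  · rw [Relation.transGen_iff] at h
    rcases h with h | ⟨b, htr, hb⟩
    · exact h.elim
    · rcases b with e | d2
      · have hcyc : Relation.TransGen (demandRel E C) (Sum.inl e) (Sum.inl e) :=
          Relation.TransGen.head hb htr
        exact ⟨e, (main e _ hcyc).1 e rfl⟩
      · exact hb.elim

lemma six_cycle {S D : Type*} {E : S → D → Prop}
    (hchordal : ∀ (v : S ⊕ D) (w : (biGraph E).Walk v v),
      w.IsCycle → 6 ≤ w.length → HasChord w)
    {a b c : S} {x y z : D}
    (hab : a ≠ b) (hbc : b ≠ c) (hac : a ≠ c)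
    (hxy : x ≠ y) (hyz : y ≠ z) (hxz : x ≠ z)
    (hbx : E b x) (hcx : E c x) (hcy : E c y) (hay : E a y) (haz : E a z) (hbz : E b z)
    (hax : ¬ E a x) (hby : ¬ E b y) (hcz : ¬ E c z) : False := by
  have h1 : (biGraph E).Adj (.inl b) (.inr x) := Or.inl ⟨b, x, rfl, rfl, hbx⟩
  have h2 : (biGraph E).Adj (.inr x) (.inl c) := Or.inr ⟨c, x, rfl, rfl, hcx⟩
  have h3 : (biGraph E).Adj (.inl c) (.inr y) := Or.inl ⟨c, y, rfl, rfl, hcy⟩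
  have h4 : (biGraph E).Adj (.inr y) (.inl a) := Or.inr ⟨a, y, rfl, rfl, hay⟩
  have h5 : (biGraph E).Adj (.inl a) (.inr z) := Or.inl ⟨a, z, rfl, rfl, haz⟩
  have h6 : (biGraph E).Adj (.inr z) (.inl b) := Or.inr ⟨b, z, rfl, rfl, hbz⟩
  set w : (biGraph E).Walk (.inl b) (.inl b) :=
    .cons h1 (.cons h2 (.cons h3 (.cons h4 (.cons h5 (.cons h6 .nil))))) with hw
  have hcyc : w.IsCycle := by
    rw [SimpleGraph.Walk.isCycle_def, SimpleGraph.Walk.isTrail_def]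
    refine ⟨?_, by simp [hw], ?_⟩
    · simp [hw, hab, hbc, hac, hxy, hyz, hxz, hab.symm, hbc.symm, hac.symm,
        hxy.symm, hyz.symm, hxz.symm]
    · simp [hw, hab, hbc, hac, hxy, hyz, hxz, hab.symm, hbc.symm, hac.symm,
        hxy.symm, hyz.symm, hxz.symm]
  have hadj' : ∀ (s : S) (d : D), (biGraph E).Adj (Sum.inl s) (Sum.inr d) → E s d := by
    rintro s d (⟨i, j, hi, hj, hEe⟩ | ⟨i, j, hi, hj, hEe⟩) <;> simp_all
  have hnadj : ∀ (s s' : S), ¬ (biGraph E).Adj (Sum.inl s) (Sum.inl s') := by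
    rintro s s' (⟨i, j, hi, hj, hEe⟩ | ⟨i, j, hi, hj, hEe⟩) <;> simp_all
  have hnadj' : ∀ (d d' : D), ¬ (biGraph E).Adj (Sum.inr d) (Sum.inr d') := by
    rintro d d' (⟨i, j, hi, hj, hEe⟩ | ⟨i, j, hi, hj, hEe⟩) <;> simp_all
  obtain ⟨u, v, hu, hv, hadj, hne⟩ := hchordal _ w hcyc (by simp [hw])
  simp only [hw, SimpleGraph.Walk.support_cons, SimpleGraph.Walk.support_nil,
    List.mem_cons, List.not_mem_nil, or_false] at hu hv
  rcases hu with rfl | rfl | rfl | rfl | rfl | rfl | rfl <;>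
    rcases hv with rfl | rfl | rfl | rfl | rfl | rfl | rfl <;>
    first
      | exact hnadj _ _ hadj
      | exact hnadj' _ _ hadj
      | exact hax (hadj' _ _ hadj)
      | exact hby (hadj' _ _ hadj)
      | exact hcz (hadj' _ _ hadj)
      | exact hax (hadj' _ _ hadj.symm)
      | exact hby (hadj' _ _ hadj.symm)
      | exact hcz (hadj' _ _ hadj.symm)
      | (apply hne; simp [hw]; done)
      | (apply hne; rw [Sym2.eq_swap]; simp [hw]; done)

lemma no_cycle {S D : Type*} {E : S → D → Prop} {C : Set (S × D)}
    (hchordal : ∀ (v : S ⊕ D) (w : (biGraph E).Walk v v),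
      w.IsCycle → 6 ≤ w.length → HasChord w)
    (hCE : ∀ e ∈ C, E e.1 e.2)
    (hclique : ∀ e ∈ C, ∀ f ∈ C, e ≠ f → conflict E e f) :
    ∀ k : ℕ, 1 ≤ k → ∀ f : ZMod k → S × D,
      (∀ i : ZMod k, f i ∈ C ∧ ¬ E (f (i + 1)).1 (f i).2) → False := by
  intro k
  induction k using Nat.strong_induction_on with
  | _ k IH =>
  intro hk f hR
  by_cases hk1 : k = 1
  · subst hk1
    have h := hR 0
    have h01 : (0 + 1 : ZMod 1) = 0 := by decide
    rw [h01] at h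
    exact h.2 (hCE _ h.1)
  by_cases hk2 : k = 2
  · subst hk2
    have h0 := hR 0
    have h1 := hR 1
    have e10 : (0 + 1 : ZMod 2) = 1 := by decide
    have e21 : (1 + 1 : ZMod 2) = 0 := by decide
    rw [e10] at h0
    rw [e21] at h1
    by_cases hef : f 0 = f 1
    · apply h0.2
      rw [← hef]
      exact hCE _ h0.1
    · rcases hclique _ h0.1 _ h1.1 hef with h | h | h | h
      · apply h0.2; rw [← h]; exact hCE _ h0.1
      · apply h0.2; rw [h]; exact hCE _ h1.1
      · exact h1.2 h
      · exact h0.2 h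
  have hk3 : 3 ≤ k := by omega
  haveI : NeZero k := ⟨by omega⟩
  have hmem : ∀ i : ZMod k, f i ∈ C := fun i => (hR i).1
  have hbad : ∀ i : ZMod k, ¬ E (f (i + 1)).1 (f i).2 := fun i => (hR i).2
  -- the key step: every "backward" edge except the forbidden ones exists
  have hE : ∀ i j : ZMod k, j ≠ i + 1 → E (f j).1 (f i).2 := by
    intro i j hji
    by_contra hne
    have hvlt : (i - j).val < k := ZMod.val_lt _
    have hvne : (i - j).val ≠ k - 1 := by
      intro hv
      apply hji
      have h1 : i - j = ((k - 1 : ℕ) : ZMod k) := by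
        conv_lhs => rw [← zmod_cast_val (i - j)]
        rw [hv]
      have h2 : ((k - 1 : ℕ) : ZMod k) = -1 := by
        rw [Nat.cast_sub (by omega : 1 ≤ k), ZMod.natCast_self, Nat.cast_one]
        ring
      rw [h2] at h1
      linear_combination -h1
    set m := (i - j).val + 1 with hm
    have hmk : m < k := by omega
    have hm1 : 1 ≤ m := by omega
    haveI : NeZero m := ⟨by omega⟩
    apply IH m hmk hm1 (fun t => f (j + ((t.val : ℕ) : ZMod k)))
    intro t
    refine ⟨hmem _, ?_⟩
    show ¬ E (f (j + (((t + 1).val : ℕ) : ZMod k))).1 (f (j + ((t.val : ℕ) : ZMod k))).2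
    have htlt : t.val < m := ZMod.val_lt t
    rcases lt_or_eq_of_le (Nat.succ_le_of_lt htlt) with hlt | heq
    · rw [zmod_add_one_val t hlt,
        show ((t.val + 1 : ℕ) : ZMod k) = ((t.val : ℕ) : ZMod k) + 1 by push_cast; ring,
        ← add_assoc]
      exact hbad _
    · rw [zmod_add_one_eq_zero t heq, ZMod.val_zero, Nat.cast_zero, add_zero,
        show t.val = (i - j).val by omega, zmod_cast_val, add_sub_cancel]
      exact hne
  have hsinj : ∀ i j : ZMod k, (f i).1 = (f j).1 → i = j := by
    intro i j hfe
    by_contra hij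
    have h1 := hbad (j - 1)
    rw [sub_add_cancel] at h1
    have h2 := hE (j - 1) i (by
      intro h
      apply hij
      rw [h, sub_add_cancel])
    rw [hfe] at h2
    exact h1 h2
  have hdinj : ∀ i j : ZMod k, (f i).2 = (f j).2 → i = j := by
    intro i j hfe
    by_contra hij
    have h1 := hbad i
    have h2 := hE j (i + 1) (by
      intro h
      apply hij
      linear_combination h)
    rw [← hfe] at h2
    exact h1 h2
  have hne1 : (1 : ZMod k) ≠ 0 := by
    intro h
    have hv : ((1 : ℕ) : ZMod k).val = 1 := by
      rw [ZMod.val_natCast]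
      exact Nat.mod_eq_of_lt (by omega)
    rw [Nat.cast_one, h, ZMod.val_zero] at hv
    exact absurd hv (by omega)
  have hne2 : (2 : ZMod k) ≠ 0 := by
    intro h
    have hv : ((2 : ℕ) : ZMod k).val = 2 := by
      rw [ZMod.val_natCast]
      exact Nat.mod_eq_of_lt (by omega)
    rw [Nat.cast_ofNat, h, ZMod.val_zero] at hv
    exact absurd hv (by omega)
  have h12 : (1 : ZMod k) ≠ 2 := fun h => hne1 (by linear_combination -h)
  have h13 : (1 : ZMod k) ≠ 3 := fun h => hne2 (by linear_combination -h)
  have h23 : (2 : ZMod k) ≠ 3 := fun h => hne1 (by linear_combination -h)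
  have h01 : (0 : ZMod k) ≠ 1 := fun h => hne1 h.symm
  have h02 : (0 : ZMod k) ≠ 2 := fun h => hne2 h.symm
  refine six_cycle hchordal (a := (f 1).1) (b := (f 2).1) (c := (f 3).1)
    (x := (f 0).2) (y := (f 1).2) (z := (f 2).2)
    (fun h => h12 (hsinj _ _ h)) (fun h => h23 (hsinj _ _ h)) (fun h => h13 (hsinj _ _ h))
    (fun h => h01 (hdinj _ _ h)) (fun h => h12 (hdinj _ _ h)) (fun h => h02 (hdinj _ _ h))
    (hE 0 2 (by rw [zero_add]; exact Ne.symm h12))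
    (hE 0 3 (by rw [zero_add]; exact Ne.symm h13))
    (hE 1 3 (by rw [one_add_one_eq_two]; exact Ne.symm h23))
    (hE 1 1 (by rw [one_add_one_eq_two]; exact h12))
    (hE 2 1 (by rw [two_add_one_eq_three]; exact h13))
    (hE 2 2 (by rw [two_add_one_eq_three]; exact h23))
    (by have := hbad 0; rwa [zero_add] at this)
    (by have := hbad 1; rwa [one_add_one_eq_two] at this)
    (by have := hbad 2; rwa [two_add_one_eq_three] at this)

end Aux

/-- If the bipartite topology graph is chordal (every cycle of length ≥ 6 has a chord),
then every clique of the conflict graph has an acyclic demand graph. -/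
theorem stmt_10 {S D : Type*} (E : S → D → Prop)
    (hchordal : ∀ (v : S ⊕ D) (w : (biGraph E).Walk v v),
      w.IsCycle → 6 ≤ w.length → HasChord w)
    (C : Set (S × D)) (hCE : ∀ e ∈ C, E e.1 e.2)
    (hclique : ∀ e ∈ C, ∀ f ∈ C, e ≠ f → conflict E e f) :
    ∀ x, ¬ Relation.TransGen (demandRel E C) x x := by
  intro x hx
  obtain ⟨e, he⟩ := demand_to_R E C hx
  obtain ⟨k, hk, f, hf⟩ := cycle_to_fun he
  exact no_cycle hchordal hCE hclique k hk f (fun i => ⟨(hf i).1, (hf i).2.2⟩)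
end
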